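/- arXiv:2507.10329 — 4 statements merged into one kernel-verified Lean document; each statement's English description precedes it below -/
import Mathlib

section
/- Let Ω be a probability space and f : Ω → ℂ an integrable random variable such that f(ω) ≠ 0 for all ω, and such that for any ω₁, ω₂ ∈ Ω the angle between f(ω₁) and f(ω₂), considered as nonzero vectors in ℝ² = ℂ, does not exceed θ for some 0 ≤ θ < 2π/3. Then |∫_Ω f dP| ≥ cos(θ/2) · ∫_Ω |f| dP. -/
/-!
Normalise by a fixed value `f ω₀`: the arguments `g ω = arg (f ω / f ω₀)` lie in `[-θ, θ]`, and
because `θ < 2π/3` no difference `g ω₁ - g ω₂` can wrap around the circle, so the pairwise angle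
bound becomes `|g ω₁ - g ω₂| ≤ θ`. All `g ω` then lie within `θ/2` of a common `φ`, so after the
rotation `c = e^{-iφ} / f ω₀` every `f ω * c` satisfies `Re (f ω * c) ≥ cos (θ/2) |f ω * c|`.
Integrating and using `Re ≤ |·|` gives the claim.
-/

open MeasureTheory

/-- The angle between two complex numbers viewed as vectors in ℝ² = ℂ:
the unique value in [0, π] whose cosine is Re(u * conj v)/(|u| |v|). -/
noncomputable def cangle (u v : ℂ) : ℝ :=
  Real.arccos ((u * starRingEnd ℂ v).re / (‖u‖ * ‖v‖))

open Complex Real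

theorem cangle_eq_angle (u v : ℂ) : cangle u v = InnerProductGeometry.angle u v := by
  rw [cangle, InnerProductGeometry.angle, Complex.inner, ← Complex.conj_re, map_mul,
    Complex.conj_conj, mul_comm]

theorem Real.Angle.abs_le_of_abs_toReal_coe_le {t θ : ℝ} (ht : |t| ≤ 2 * θ)
    (hθ : θ < 2 * π / 3) (h : |(t : Angle).toReal| ≤ θ) : |t| ≤ θ := by
  obtain ⟨ht₁, ht₂⟩ := abs_le.1 ht
  rcases lt_or_ge π t with hπt | htπ
  · rw [Angle.toReal_coe_eq_self_sub_two_pi_iff.2 ⟨hπt, by linarith⟩] at h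
    linarith [le_abs_self (t - 2 * π), neg_abs_le (t - 2 * π)]
  rcases le_or_gt t (-π) with htπ' | htπ'
  · rw [Angle.toReal_coe_eq_self_add_two_pi_iff.2 ⟨by linarith, htπ'⟩] at h
    linarith [le_abs_self (t + 2 * π)]
  · rwa [Angle.toReal_coe_eq_self_iff.2 ⟨htπ', htπ⟩] at h

theorem Complex.abs_arg_sub_arg_le {x y : ℂ} {θ : ℝ} (hx : x ≠ 0) (hy : y ≠ 0)
    (hxθ : |arg x| ≤ θ) (hyθ : |arg y| ≤ θ) (hθ : θ < 2 * π / 3) (h : |arg (x / y)| ≤ θ) :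
    |arg x - arg y| ≤ θ := by
  refine Angle.abs_le_of_abs_toReal_coe_le ((abs_sub _ _).trans (by linarith)) hθ ?_
  rwa [Angle.coe_sub, ← arg_div_coe_angle hx hy, arg_coe_angle_toReal_eq_arg]

theorem exists_forall_abs_sub_le_half {ι : Type*} [Nonempty ι] {g : ι → ℝ} {θ : ℝ}
    (h : ∀ i j, |g i - g j| ≤ θ) : ∃ φ, ∀ i, |g i - φ| ≤ θ / 2 := by
  obtain ⟨i₀⟩ := ‹Nonempty ι›
  have hbdd : BddBelow (Set.range g) :=
    ⟨g i₀ - θ, by rintro _ ⟨i, rfl⟩; linarith [(abs_le.1 (h i₀ i)).2]⟩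
  refine ⟨sInf (Set.range g) + θ / 2, fun i => abs_le.2 ⟨?_, ?_⟩⟩
  · linarith [csInf_le hbdd ⟨i, rfl⟩]
  · have : g i - θ ≤ sInf (Set.range g) := le_csInf (Set.range_nonempty g) <| by
      rintro _ ⟨j, rfl⟩; linarith [(abs_le.1 (h i j)).2]
    linarith

theorem Complex.cos_mul_norm_le_re_mul_exp {z : ℂ} {φ α : ℝ} (h : |arg z - φ| ≤ α)
    (hα : α ≤ π) : Real.cos α * ‖z‖ ≤ (z * exp (↑(-φ) * I)).re := by
  have hcos : Real.cos α ≤ Real.cos (arg z - φ) := by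
    rw [← Real.cos_abs (arg z - φ)]
    exact Real.cos_le_cos_of_nonneg_of_le_pi (abs_nonneg _) hα h
  have hre : (z * exp (↑(-φ) * I)).re = ‖z‖ * Real.cos (arg z - φ) := by
    conv_lhs => rw [← norm_mul_exp_arg_mul_I z]
    rw [mul_assoc, ← exp_add, ← add_mul, ← ofReal_add,
      re_ofReal_mul, exp_ofReal_mul_I_re, ← sub_eq_add_neg]
  rw [hre, mul_comm]
  exact mul_le_mul_of_nonneg_left hcos (norm_nonneg z)

theorem mul_integral_norm_le_norm_integral {𝕜 α : Type*} [RCLike 𝕜] [MeasurableSpace α]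
    {μ : Measure α} {f : α → 𝕜} (hf : Integrable f μ) {c : 𝕜} (hc : c ≠ 0) {k : ℝ}
    (h : ∀ a, k * ‖f a * c‖ ≤ RCLike.re (f a * c)) :
    k * ∫ a, ‖f a‖ ∂μ ≤ ‖∫ a, f a ∂μ‖ := by
  refine le_of_mul_le_mul_right ?_ (norm_pos_iff.2 hc)
  calc k * (∫ a, ‖f a‖ ∂μ) * ‖c‖ = ∫ a, k * ‖f a * c‖ ∂μ := by
        simp only [norm_mul, integral_const_mul, integral_mul_const, mul_assoc]
    _ ≤ ∫ a, RCLike.re (f a * c) ∂μ :=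
        integral_mono ((hf.mul_const c).norm.const_mul k) (hf.mul_const c).re h
    _ = RCLike.re (∫ a, f a * c ∂μ) := integral_re (hf.mul_const c)
    _ ≤ ‖∫ a, f a * c ∂μ‖ := RCLike.re_le_norm _
    _ = ‖∫ a, f a ∂μ‖ * ‖c‖ := by rw [integral_mul_const, norm_mul]

theorem stmt_0_general {Ω : Type*} [MeasureSpace Ω]
    (f : Ω → ℂ) (hf : Integrable f) (hne : ∀ ω, f ω ≠ 0)
    (θ : ℝ) (hθ : θ < 2 * Real.pi / 3)
    (hangle : ∀ ω₁ ω₂, cangle (f ω₁) (f ω₂) ≤ θ) :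
    Real.cos (θ / 2) * ∫ ω, ‖f ω‖ ≤ ‖∫ ω, f ω‖ := by
  rcases isEmpty_or_nonempty Ω with _ | _
  · simp [Subsingleton.elim (volume : Measure Ω) 0]
  obtain ⟨ω₀⟩ := ‹Nonempty Ω›
  have habs_arg : ∀ ω₁ ω₂, |arg (f ω₁ / f ω₂)| ≤ θ := fun ω₁ ω₂ => by
    rw [← angle_eq_abs_arg (hne ω₁) (hne ω₂), ← cangle_eq_angle]
    exact hangle ω₁ ω₂
  have hne₀ := hne ω₀
  have hsector : ∀ ω₁ ω₂, |arg (f ω₁ / f ω₀) - arg (f ω₂ / f ω₀)| ≤ θ := fun ω₁ ω₂ =>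
    abs_arg_sub_arg_le (div_ne_zero (hne ω₁) hne₀) (div_ne_zero (hne ω₂) hne₀)
      (habs_arg ω₁ ω₀) (habs_arg ω₂ ω₀) hθ
      (by rw [div_div_div_cancel_right₀ hne₀]; exact habs_arg ω₁ ω₂)
  obtain ⟨φ, hφ⟩ := exists_forall_abs_sub_le_half hsector
  have hθπ : θ / 2 ≤ π := by linarith [pi_pos]
  refine mul_integral_norm_le_norm_integral hf (c := exp (↑(-φ) * I) / f ω₀)
    (div_ne_zero (exp_ne_zero _) hne₀) fun ω => ?_
  rw [show f ω * (exp (↑(-φ) * I) / f ω₀) = f ω / f ω₀ * exp (↑(-φ) * I) by ring, norm_mul,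
    norm_exp_ofReal_mul_I, mul_one]
  exact cos_mul_norm_le_re_mul_exp (hφ ω) hθπ

theorem stmt_0 {Ω : Type*} [MeasureSpace Ω] [IsProbabilityMeasure (volume : Measure Ω)]
    (f : Ω → ℂ) (hf : Integrable f) (hne : ∀ ω, f ω ≠ 0)
    (θ : ℝ) (hθ0 : 0 ≤ θ) (hθ : θ < 2 * Real.pi / 3)
    (hangle : ∀ ω₁ ω₂, cangle (f ω₁) (f ω₂) ≤ θ) :
    Real.cos (θ / 2) * ∫ ω, ‖f ω‖ ≤ ‖∫ ω, f ω‖ :=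
  stmt_0_general f hf hne θ hθ hangle
end

section
/- For all real Δ ≥ 3 and γ ≥ 3, the inequality (1 + 1/(6Δ)) · (6/(γ³Δ² − 2)) · (1/cos(1/Δ)) ≤ sin(1/(2Δ²)) holds. -/
/-! With `x = 1/Δ ≤ 1/3`, crude bounds suffice: `1 + x/6 ≤ 19/18`, `cos x ≥ 1 - x²/2 ≥ 17/18`,
`γ³ ≥ 27`, and `sin y ≥ y - y³/6 ≥ (1943/1944) y` for `y = 1/(2Δ²) ≤ 1/18`. The resulting
inequality between rational functions of `Δ` holds with a wide margin. -/

open Real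

lemma one_add_one_div_six_mul_le {Δ : ℝ} (hΔ : 3 ≤ Δ) : 1 + 1 / (6 * Δ) ≤ 19 / 18 := by
  have : 1 / (6 * Δ) ≤ 1 / 18 := one_div_le_one_div_of_le (by norm_num) (by linarith)
  linarith

lemma seventeen_div_eighteen_le_cos_one_div {Δ : ℝ} (hΔ : 3 ≤ Δ) : 17 / 18 ≤ cos (1 / Δ) := by
  have hx : 1 / Δ ≤ 1 / 3 := one_div_le_one_div_of_le (by norm_num) hΔ
  have hx0 : 0 < 1 / Δ := by positivity
  nlinarith [one_sub_sq_div_two_le_cos (x := 1 / Δ)]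

lemma one_div_cos_one_div_le {Δ : ℝ} (hΔ : 3 ≤ Δ) : 1 / cos (1 / Δ) ≤ 18 / 17 := by
  have hcos := seventeen_div_eighteen_le_cos_one_div hΔ
  rw [div_le_div_iff₀ (by linarith) (by norm_num)]
  linarith

lemma twenty_seven_mul_sq_sub_two_pos {Δ : ℝ} (hΔ : 3 ≤ Δ) : 0 < 27 * Δ ^ 2 - 2 := by
  nlinarith

lemma twenty_seven_mul_sq_le_cube_mul_sq {Δ γ : ℝ} (hγ : 3 ≤ γ) :
    27 * Δ ^ 2 ≤ γ ^ 3 * Δ ^ 2 := by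
  have hγ3 : (3 : ℝ) ^ 3 ≤ γ ^ 3 := pow_le_pow_left₀ (by norm_num) hγ 3
  nlinarith [sq_nonneg Δ]

lemma mul_le_sin_of_le {y : ℝ} (hy0 : 0 < y) (hy : y ≤ 1 / 18) : 1943 / 1944 * y ≤ sin y := by
  have hsin := sin_gt_sub_cube hy0
  nlinarith [pow_le_pow_left₀ hy0.le hy 2]

lemma factor_bounds_product_le {Δ : ℝ} (hΔ : 3 ≤ Δ) :
    19 / 18 * (6 / (27 * Δ ^ 2 - 2)) * (18 / 17) ≤ 1943 / 1944 * (1 / (2 * Δ ^ 2)) := by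
  have hΔ2 : 9 ≤ Δ ^ 2 := by nlinarith
  have hden := twenty_seven_mul_sq_sub_two_pos hΔ
  rw [show 19 / 18 * (6 / (27 * Δ ^ 2 - 2)) * (18 / 17) = 114 / (17 * (27 * Δ ^ 2 - 2)) by
        field_simp; ring,
      show 1943 / 1944 * (1 / (2 * Δ ^ 2)) = 1943 / (3888 * Δ ^ 2) by field_simp; ring,
      div_le_div_iff₀ (by positivity) (by positivity)]
  nlinarith

theorem stmt_9 (Δ γ : ℝ) (hΔ : 3 ≤ Δ) (hγ : 3 ≤ γ) :
    (1 + 1 / (6 * Δ)) * (6 / (γ ^ 3 * Δ ^ 2 - 2)) * (1 / Real.cos (1 / Δ)) ≤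
      Real.sin (1 / (2 * Δ ^ 2)) := by
  have hden := twenty_seven_mul_sq_sub_two_pos hΔ
  have hγden : 27 * Δ ^ 2 ≤ γ ^ 3 * Δ ^ 2 := twenty_seven_mul_sq_le_cube_mul_sq hγ
  have hcos := seventeen_div_eighteen_le_cos_one_div hΔ
  have hsec := one_div_cos_one_div_le hΔ
  have hy : 1 / (2 * Δ ^ 2) ≤ 1 / 18 :=
    one_div_le_one_div_of_le (by norm_num) (by nlinarith)
  calc (1 + 1 / (6 * Δ)) * (6 / (γ ^ 3 * Δ ^ 2 - 2)) * (1 / Real.cos (1 / Δ))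
      ≤ 19 / 18 * (6 / (27 * Δ ^ 2 - 2)) * (18 / 17) := by
        gcongr
        · exact div_nonneg (by norm_num) (by linarith)
        · exact one_add_one_div_six_mul_le hΔ
    _ ≤ 1943 / 1944 * (1 / (2 * Δ ^ 2)) := factor_bounds_product_le hΔ
    _ ≤ Real.sin (1 / (2 * Δ ^ 2)) := mul_le_sin_of_le (by positivity) hy
end

section
/- For all real Δ ≥ 5 and γ ≥ 3, the inequality (1 + 1/(6Δ)) · (1 + 6/(γ³Δ² − 2)) · (1/cos(1/Δ)) ≤ 1 + 1/(3Δ) holds. -/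
/-!
Since `cos x ≥ 1 - x²/2` and `γ³ ≥ 27`, the left-hand side is at most its value at `γ = 3` with
`cos (1/Δ)` replaced by `1 - 1/(2Δ²)`. Clearing denominators, the remaining inequality becomes
`27Δ⁴ - 117Δ³ - 35Δ² + 6Δ + 2 ≥ 0`, which holds for `Δ ≥ 5`.
-/

open Real

lemma le_one_add_one_div_three_mul_of_five_le {Δ : ℝ} (hΔ : 5 ≤ Δ) :
    (1 + 1 / (6 * Δ)) * (1 + 6 / (27 * Δ ^ 2 - 2)) * (1 / (1 - (1 / Δ) ^ 2 / 2)) ≤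
      1 + 1 / (3 * Δ) := by
  have hΔ0 : 0 < Δ := by linarith
  have hden : 0 < 27 * Δ ^ 2 - 2 := by nlinarith
  have hcos : 0 < 1 - (1 / Δ) ^ 2 / 2 := by
    rw [div_pow, one_pow, sub_pos, div_div, div_lt_one (by positivity)]
    nlinarith
  rw [mul_one_div, div_le_iff₀ hcos, one_add_div hden.ne']
  field_simp
  rw [div_le_iff₀ (by linarith)]
  nlinarith [mul_pos (mul_pos hΔ0 hΔ0) (mul_pos hΔ0 hΔ0), mul_pos hΔ0 hΔ0,
    mul_nonneg (mul_nonneg hΔ0.le hΔ0.le) (by linarith : (0:ℝ) ≤ Δ - 5)]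

theorem stmt_10 (Δ γ : ℝ) (hΔ : 5 ≤ Δ) (hγ : 3 ≤ γ) :
    (1 + 1 / (6 * Δ)) * (1 + 6 / (γ ^ 3 * Δ ^ 2 - 2)) * (1 / Real.cos (1 / Δ)) ≤
      1 + 1 / (3 * Δ) := by
  have hΔ0 : 0 < Δ := by linarith
  have hden : 0 < 27 * Δ ^ 2 - 2 := by nlinarith
  have hγ3 : (27 : ℝ) ≤ γ ^ 3 := by
    calc (27 : ℝ) = 3 ^ 3 := by norm_num
      _ ≤ γ ^ 3 := by gcongr
  have hsq : (1 / Δ) ^ 2 < 2 := by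
    rw [div_pow, one_pow, div_lt_iff₀ (by positivity)]
    nlinarith
  have hcos : 0 < cos (1 / Δ) :=
    cos_pos_of_le_one (by rw [abs_of_pos (by positivity)]; exact (div_le_one hΔ0).2 (by linarith))
  calc (1 + 1 / (6 * Δ)) * (1 + 6 / (γ ^ 3 * Δ ^ 2 - 2)) * (1 / cos (1 / Δ))
      ≤ (1 + 1 / (6 * Δ)) * (1 + 6 / (27 * Δ ^ 2 - 2)) * (1 / (1 - (1 / Δ) ^ 2 / 2)) := by
        gcongr
        · linarith
        · exact one_sub_sq_div_two_le_cos
    _ ≤ 1 + 1 / (3 * Δ) := le_one_add_one_div_three_mul_of_five_le hΔ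
end

section
/- Let Ω₁, …, Ω_m be probability spaces with product Ω, and let f₁, …, fₙ : Ω → ℂ be bounded measurable random variables such that each f_i depends on at most r_i coordinates and shares a coordinate with at most Δ_i of the other functions. Set Δ = max{5, Δ₁, …, Δₙ} and μ_i = min{r_i, Δ_i + 1}. If |f_i(x)| ≤ 1 + 1/(6Δ) for all x and all i, and P(f_i ≠ 1) < (3Δ)^{-3μ_i} for all i, then ∫_Ω ∏_{i=1}^n f_i(x) dx ≠ 0. -/
/-!
Write `P S = ∫ ∏_{i ∈ S} f i`. By induction on `|S|`, removing a factor changes `P S` only by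
a relative error `ε = 12 (3Δ)⁻³`, so `|P S| ≥ (1 - ε) ^ |S| > 0`. The difference
`P S - P (S \ {i}) = ∫ (f i - 1) ∏_{S \ {i}} f` is small because `f i - 1` lives on an event of
probability at most `(3Δ)⁻³`, and, once we condition on the coordinates of `f i` and of its
neighbours, this event is independent of the product over the non-neighbours. The induction
therefore also carries the `L¹` norm of the conditional expectation of a partial product
`∏_F f` given a set `K` of coordinates: it exceeds `|P F|` by at most a factor `1 + 3ε` for each
`f j`, `j ∈ F`, that depends on a coordinate in `K`.
-/

open MeasureTheory Finset

section CoordinateResampling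

variable {ι : Type*} [DecidableEq ι] {Ω : ι → Type*}

theorem piecewise_piecewise_eq_piecewise_union (K L : Finset ι) (y u x : ∀ j, Ω j) :
    K.piecewise y (L.piecewise u x) = (K ∪ L).piecewise (K.piecewise y u) x := by
  ext j
  by_cases hK : j ∈ K
  · simp [hK]
  · by_cases hL : j ∈ L <;> simp [hK, hL]

variable [Fintype ι] [∀ j, MeasureSpace (Ω j)] {𝕜 : Type*} [RCLike 𝕜]

/-- The conditional expectation of `g` given the coordinates in `K`, evaluated at `y`. -/
noncomputable def condExpCoords (K : Finset ι) (g : (∀ j, Ω j) → 𝕜) (y : ∀ j, Ω j) : 𝕜 :=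
  ∫ x, g (K.piecewise y x)

variable {g h : (∀ j, Ω j) → 𝕜} {Cg Ch : ℝ}

theorem condExpCoords_empty (g : (∀ j, Ω j) → 𝕜) (y : ∀ j, Ω j) :
    condExpCoords ∅ g y = ∫ x, g x := by
  simp [condExpCoords]

theorem condExpCoords_of_dependsOn_disjoint {K : Finset ι} {B : Set ι} (hg : DependsOn g B)
    (hBK : Disjoint B K) (y : ∀ j, Ω j) : condExpCoords K g y = ∫ x, g x :=
  integral_congr_ae <| .of_forall fun _ => hg fun _ hj =>
    piecewise_eq_of_notMem _ _ _ fun hjK => hBK.notMem_of_mem_left hj hjK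

theorem DependsOn.condExpCoords {B : Set ι} (hg : DependsOn g B) (K : Finset ι) :
    DependsOn (condExpCoords K g) B := fun y y' hyy' => by
  refine integral_congr_ae <| .of_forall fun x => hg fun j hj => ?_
  by_cases hjK : j ∈ K <;> simp [hjK, hyy' j hj]

variable [∀ j, IsProbabilityMeasure (volume : Measure (Ω j))]

theorem measurePreserving_piecewise (K : Finset ι) :
    MeasurePreserving (fun p : (∀ j, Ω j) × (∀ j, Ω j) => K.piecewise p.1 p.2) := by
  have hmeas : Measurable fun p : (∀ j, Ω j) × (∀ j, Ω j) => K.piecewise p.1 p.2 := by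
    refine measurable_pi_lambda _ fun j => ?_
    by_cases hj : j ∈ K
    · simp only [piecewise_eq_of_mem _ _ _ hj]; fun_prop
    · simp only [piecewise_eq_of_notMem _ _ _ hj]; fun_prop
  refine ⟨hmeas, (Measure.pi_eq fun s hs => ?_).symm⟩
  have hpre : (fun p : (∀ j, Ω j) × (∀ j, Ω j) => K.piecewise p.1 p.2) ⁻¹' Set.univ.pi s =
      Set.univ.pi (fun j => if j ∈ K then s j else Set.univ) ×ˢ
        Set.univ.pi (fun j => if j ∈ K then Set.univ else s j) := by
    ext p
    simp only [Set.mem_preimage, Set.mem_prod, Set.mem_univ_pi, ← forall_and]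
    refine forall_congr' fun j => ?_
    by_cases hj : j ∈ K <;> simp [hj]
  rw [Measure.map_apply hmeas (.univ_pi hs), hpre, Measure.volume_eq_prod, Measure.prod_prod,
    volume_pi, Measure.pi_pi, Measure.pi_pi, ← prod_mul_distrib]
  refine prod_congr rfl fun j _ => ?_
  by_cases hj : j ∈ K <;> simp [hj]

theorem integral_condExpCoords (K : Finset ι) (hg : Integrable g) :
    ∫ y, condExpCoords K g y = ∫ x, g x := by
  have h := measurePreserving_piecewise (Ω := Ω) K
  simp only [condExpCoords]
  rw [← integral_prod (fun p : (∀ j, Ω j) × (∀ j, Ω j) => g (K.piecewise p.1 p.2))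
    ((h.integrable_comp hg.aestronglyMeasurable).2 hg), ← Measure.volume_eq_prod,
    ← integral_map h.measurable.aemeasurable (h.map_eq ▸ hg.aestronglyMeasurable), h.map_eq]

theorem integrable_comp_piecewise (K : Finset ι) (y : ∀ j, Ω j) (hg : Measurable g)
    (hgC : ∀ x, ‖g x‖ ≤ Cg) : Integrable fun x => g (K.piecewise y x) := by
  have hmeas : Measurable fun x : ∀ j, Ω j => K.piecewise y x :=
    (measurePreserving_piecewise K).measurable.comp (measurable_const.prodMk measurable_id)
  exact .of_bound (hg.comp hmeas).aestronglyMeasurable Cg (.of_forall fun _ => hgC _)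

theorem measurable_condExpCoords (K : Finset ι) (hg : Measurable g) :
    Measurable (condExpCoords K g) :=
  ((hg.comp (measurePreserving_piecewise K).measurable).stronglyMeasurable.integral_prod_right'
    (ν := volume)).measurable

theorem norm_condExpCoords_le (K : Finset ι) (hgC : ∀ x, ‖g x‖ ≤ Cg) (y : ∀ j, Ω j) :
    ‖condExpCoords K g y‖ ≤ Cg := by
  simpa [condExpCoords] using
    norm_integral_le_of_norm_le_const (μ := volume) (.of_forall fun x => hgC (K.piecewise y x))

theorem integrable_condExpCoords (K : Finset ι) (hg : Measurable g) (hgC : ∀ x, ‖g x‖ ≤ Cg) :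
    Integrable (condExpCoords K g) :=
  .of_bound (measurable_condExpCoords K hg).aestronglyMeasurable Cg
    (.of_forall (norm_condExpCoords_le K hgC))

theorem integral_norm_condExpCoords_add_le (K : Finset ι) (hg : Measurable g)
    (hgC : ∀ x, ‖g x‖ ≤ Cg) (hh : Measurable h) (hhC : ∀ x, ‖h x‖ ≤ Ch) :
    ∫ y, ‖condExpCoords K (g + h) y‖ ≤
      (∫ y, ‖condExpCoords K g y‖) + ∫ y, ‖condExpCoords K h y‖ := by
  have hadd : condExpCoords K (g + h) = condExpCoords K g + condExpCoords K h :=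
    funext fun y => integral_add (integrable_comp_piecewise K y hg hgC)
      (integrable_comp_piecewise K y hh hhC)
  have hgi := integrable_condExpCoords K hg hgC
  have hhi := integrable_condExpCoords K hh hhC
  rw [hadd]
  exact (integral_mono (hgi.add hhi).norm (hgi.norm.add hhi.norm) fun y => norm_add_le _ _).trans_eq
    (integral_add hgi.norm hhi.norm)

theorem integral_norm_condExpCoords_le (K : Finset ι) (hg : Measurable g)
    (hgC : ∀ x, ‖g x‖ ≤ Cg) : ∫ y, ‖condExpCoords K g y‖ ≤ ∫ x, ‖g x‖ :=
  calc ∫ y, ‖condExpCoords K g y‖ ≤ ∫ y, condExpCoords K (fun x => ‖g x‖) y :=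
        integral_mono (integrable_condExpCoords K hg hgC).norm
          (integrable_condExpCoords K hg.norm (by simpa using hgC))
          fun _ => norm_integral_le_integral_norm _
    _ = ∫ x, ‖g x‖ :=
        integral_condExpCoords K
          (Integrable.of_bound hg.aestronglyMeasurable Cg (.of_forall hgC)).norm

theorem condExpCoords_mul_of_dependsOn {a b : (∀ j, Ω j) → 𝕜} {K L : Finset ι}
    (ha : DependsOn a L) (hab : Measurable (a * b)) (habC : ∀ x, ‖a x * b x‖ ≤ Cg) :
    condExpCoords K (a * b) = condExpCoords K (a * condExpCoords (K ∪ L) b) := by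
  funext y
  simp only [condExpCoords]
  rw [← integral_condExpCoords L (integrable_comp_piecewise K y hab habC)]
  refine integral_congr_ae <| .of_forall fun u => ?_
  simp only [condExpCoords, Pi.mul_apply, piecewise_piecewise_eq_piecewise_union]
  rw [← integral_const_mul]
  refine integral_congr_ae <| .of_forall fun x => ?_
  dsimp only
  congr 1
  exact ha fun j hj => piecewise_eq_of_mem _ _ _ (mem_union_right K hj)

theorem integral_mul_of_dependsOn_disjoint {a b : (∀ j, Ω j) → 𝕜} {A : Finset ι} {B : Set ι}
    (ha : DependsOn a A) (hb : DependsOn b B) (hAB : Disjoint B A)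
    (hab : Integrable fun x => a x * b x) :
    ∫ x, a x * b x = (∫ x, a x) * ∫ x, b x := by
  rw [← integral_condExpCoords A hab, ← integral_mul_const]
  refine integral_congr_ae <| .of_forall fun y => ?_
  dsimp only
  rw [condExpCoords, ← integral_const_mul]
  refine integral_congr_ae <| .of_forall fun x => ?_
  dsimp only
  rw [ha fun j hj => piecewise_eq_of_mem _ _ _ hj, hb fun j hj =>
    piecewise_eq_of_notMem _ _ _ fun hjA => hAB.notMem_of_mem_left hj hjA]

theorem integral_norm_condExpCoords_mul_le {a b : (∀ j, Ω j) → 𝕜} {K L : Finset ι}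
    (ha : DependsOn a L) (ha' : Measurable a) (haC : ∀ x, ‖a x‖ ≤ Cg) (hb : Measurable b)
    (hbC : ∀ x, ‖b x‖ ≤ Ch) :
    ∫ y, ‖condExpCoords K (a * b) y‖ ≤ ∫ x, ‖a x‖ * ‖condExpCoords (K ∪ L) b x‖ := by
  have hmul : ∀ x, ‖a x * condExpCoords (K ∪ L) b x‖ ≤ Cg * Ch := fun x => by
    rw [norm_mul]
    exact mul_le_mul (haC x) (norm_condExpCoords_le _ hbC x) (norm_nonneg _)
      ((norm_nonneg _).trans (haC x))
  rw [condExpCoords_mul_of_dependsOn ha (ha'.mul hb) fun x => by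
    rw [norm_mul]; exact mul_le_mul (haC x) (hbC x) (norm_nonneg _) ((norm_nonneg _).trans (haC x))]
  simpa only [Pi.mul_apply, norm_mul] using
    integral_norm_condExpCoords_le K (ha'.mul (measurable_condExpCoords _ hb)) hmul

end CoordinateResampling

theorem measureReal_setOf_eq_zero_of_const {α β : Type*} [MeasurableSpace α] {ν : Measure α}
    [IsProbabilityMeasure ν] {g : α → β} (hg : ∀ x y, g x = g y) {p : β → Prop}
    (h : ν.real {x | p (g x)} < 1) : ν.real {x | p (g x)} = 0 := by
  by_cases hx : ∃ x, p (g x)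
  · obtain ⟨x, hx⟩ := hx
    have huniv : {y | p (g y)} = Set.univ :=
      Set.eq_univ_of_forall fun y => show p (g y) from hg x y ▸ hx
    rw [huniv, probReal_univ] at h
    exact absurd h (lt_irrefl 1)
  · simp only [not_exists] at hx
    simp [hx]

theorem one_add_pow_le_inv_one_sub {y : ℝ} (hy : 0 ≤ y) {n : ℕ} (hny : n * y < 1) :
    (1 + y) ^ n ≤ (1 - n * y)⁻¹ :=
  calc (1 + y) ^ n ≤ Real.exp y ^ n :=
        pow_le_pow_left₀ (by linarith) (by linarith [Real.add_one_le_exp y]) n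
    _ = Real.exp (n * y) := (Real.exp_nat_mul y n).symm
    _ ≤ (1 - n * y)⁻¹ := by
        simpa [one_div] using Real.exp_bound_div_one_sub_of_interval (by positivity) hny

theorem two_add_mul_one_add_pow_le_three (Δ : ℕ) :
    (2 + 1 / (6 * (Δ : ℝ))) * (1 + 1 / (6 * (Δ : ℝ))) ^ Δ ≤ 3 := by
  rcases Nat.eq_zero_or_pos Δ with rfl | hΔ
  · norm_num
  have hΔ' : (1 : ℝ) ≤ Δ := by exact_mod_cast hΔ
  have hnt : (Δ : ℝ) * (1 / (6 * Δ)) = 1 / 6 := by field_simp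
  have hpow := one_add_pow_le_inv_one_sub (y := 1 / (6 * (Δ : ℝ))) (by positivity) (n := Δ)
    (by rw [hnt]; norm_num)
  rw [hnt] at hpow
  have ht : 1 / (6 * (Δ : ℝ)) ≤ 1 / 6 := by gcongr; linarith
  calc (2 + 1 / (6 * (Δ : ℝ))) * (1 + 1 / (6 * (Δ : ℝ))) ^ Δ
      ≤ (2 + 1 / 6) * (1 - 1 / 6)⁻¹ := by gcongr
    _ ≤ 3 := by norm_num

theorem one_sub_mul_norm_le_of_norm_sub_le {E : Type*} [SeminormedAddCommGroup E] {x y : E}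
    {c : ℝ} (h : ‖x - y‖ ≤ c * ‖y‖) : (1 - c) * ‖y‖ ≤ ‖x‖ := by
  linarith [norm_sub_norm_le y x, norm_sub_rev x y]

structure LocalFamily {ι : Type*} [Fintype ι] [DecidableEq ι] (Ω : ι → Type*)
    [∀ j, MeasureSpace (Ω j)] (V : Type*) [Fintype V] [DecidableEq V] where
  f : V → (∀ j, Ω j) → ℂ
  J : V → Finset ι
  Δ : ℕ
  measurable : ∀ i, Measurable (f i)
  dependsOn : ∀ i, DependsOn (f i) (J i)
  five_le_Δ : 5 ≤ Δ
  card_nbr_le : ∀ i, #{j | j ≠ i ∧ (J i ∩ J j).Nonempty} ≤ Δ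
  norm_le : ∀ i x, ‖f i x‖ ≤ 1 + 1 / (6 * (Δ : ℝ))
  measureReal_ne_one_le : ∀ i, volume.real {x | f i x ≠ 1} ≤ ((3 * (Δ : ℝ)) ^ 3)⁻¹

namespace LocalFamily

variable {ι : Type*} [Fintype ι] [DecidableEq ι] {Ω : ι → Type*} [∀ j, MeasureSpace (Ω j)]
  {V : Type*} [Fintype V] [DecidableEq V] (C : LocalFamily Ω V)

def nbr (i : V) : Finset V := {j | j ≠ i ∧ (C.J i ∩ C.J j).Nonempty}

def prodFun (S : Finset V) (x : ∀ j, Ω j) : ℂ := ∏ i ∈ S, C.f i x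

noncomputable def integralProd (S : Finset V) : ℂ := ∫ x, C.prodFun S x

noncomputable def condNormProd (F : Finset V) (K : Finset ι) : ℝ :=
  ∫ y, ‖condExpCoords K (C.prodFun F) y‖

def touching (F : Finset V) (K : Finset ι) : Finset V := {j ∈ F | (C.J j ∩ K).Nonempty}

/-- `12 = 3 * 2 * 2`: `3` bounds `|f i - 1| ∏ |f j|` over at most `Δ` neighbours `j`, one `2`
pays for erasing those neighbours and the other for the at most `Δ²` factors that newly depend
on the conditioned coordinates. -/
noncomputable def ε : ℝ := 12 * ((3 * (C.Δ : ℝ)) ^ 3)⁻¹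

theorem ε_nonneg : 0 ≤ C.ε := by unfold ε; positivity

theorem ε_le_third : C.ε ≤ 1 / 3 := by
  have hΔ : (5 : ℝ) ≤ C.Δ := by exact_mod_cast C.five_le_Δ
  rw [ε, ← div_eq_mul_inv, div_le_iff₀ (by positivity)]
  nlinarith [pow_le_pow_left₀ (by norm_num) hΔ 3]

theorem one_le_two_mul_one_sub_ε_pow : 1 ≤ 2 * (1 - C.ε) ^ C.Δ := by
  have hΔ : (5 : ℝ) ≤ C.Δ := by exact_mod_cast C.five_le_Δ
  have hBernoulli := one_add_mul_le_pow (a := -C.ε) (by linarith [C.ε_le_third]) C.Δ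
  have hΔε : C.Δ * C.ε ≤ 1 / 2 := by
    rw [ε, ← mul_assoc, ← div_eq_mul_inv, div_le_iff₀ (by positivity)]
    nlinarith [mul_le_mul_of_nonneg_left (pow_le_pow_left₀ (by norm_num) hΔ 2)
      (by linarith : (0 : ℝ) ≤ C.Δ)]
  rw [← sub_eq_add_neg] at hBernoulli
  nlinarith

theorem one_add_three_ε_pow_le_two : (1 + 3 * C.ε) ^ (C.Δ ^ 2) ≤ 2 := by
  have hΔ : (5 : ℝ) ≤ C.Δ := by exact_mod_cast C.five_le_Δ
  have hΔε : ((C.Δ ^ 2 : ℕ) : ℝ) * (3 * C.ε) ≤ 1 / 2 := by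
    rw [ε, Nat.cast_pow, ← mul_assoc, ← mul_assoc, ← div_eq_mul_inv, div_le_iff₀ (by positivity)]
    nlinarith
  calc (1 + 3 * C.ε) ^ (C.Δ ^ 2) ≤ (1 - ((C.Δ ^ 2 : ℕ) : ℝ) * (3 * C.ε))⁻¹ :=
        one_add_pow_le_inv_one_sub (by linarith [C.ε_nonneg]) (by linarith)
    _ ≤ 2 := by
        rw [inv_le_comm₀ (by linarith) two_pos]
        linarith

theorem one_add_ε_le : 1 + C.ε ≤ (1 + 3 * C.ε) * (1 - C.ε) := by
  nlinarith [C.ε_nonneg, C.ε_le_third]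

theorem card_nbr_le' (i : V) : #(C.nbr i) ≤ C.Δ := C.card_nbr_le i

theorem disjoint_J_of_notMem_nbr {i j : V} (hj : j ∉ C.nbr i) (hji : j ≠ i) :
    Disjoint (C.J i) (C.J j) := by
  simpa [nbr, hji, Finset.not_nonempty_iff_eq_empty, Finset.disjoint_iff_inter_eq_empty] using hj

theorem disjoint_biUnion_sdiff_nbr {i : V} {F : Finset V} (hiF : i ∉ F) :
    Disjoint (↑((F \ C.nbr i).biUnion C.J) : Set ι) ↑(C.J i) := by
  rw [disjoint_coe, disjoint_biUnion_left]
  intro j hj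
  obtain ⟨hjF, hji⟩ := mem_sdiff.1 hj
  exact (C.disjoint_J_of_notMem_nbr hji fun h => hiF (h ▸ hjF)).symm

theorem measurable_prodFun (S : Finset V) : Measurable (C.prodFun S) :=
  Finset.measurable_prod S fun i _ => C.measurable i

theorem measurableSet_ne_one (i : V) : MeasurableSet {x | C.f i x ≠ 1} :=
  (C.measurable i (measurableSet_singleton 1)).compl

theorem norm_prodFun_le (S : Finset V) (x : ∀ j, Ω j) :
    ‖C.prodFun S x‖ ≤ (1 + 1 / (6 * (C.Δ : ℝ))) ^ #S := by
  rw [prodFun, norm_prod, ← prod_const]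
  exact prod_le_prod (fun _ _ => norm_nonneg _) fun i _ => C.norm_le i x

theorem norm_sub_one_le (i : V) (x : ∀ j, Ω j) : ‖C.f i x - 1‖ ≤ 2 + 1 / (6 * (C.Δ : ℝ)) := by
  linarith [norm_sub_le (C.f i x) 1, norm_one (α := ℂ), C.norm_le i x]

theorem norm_sub_one_mul_prodFun_le_indicator {i : V} {N : Finset V} (hN : #N ≤ C.Δ)
    (x : ∀ j, Ω j) :
    ‖(C.f i x - 1) * C.prodFun N x‖ ≤ 3 * {x | C.f i x ≠ 1}.indicator 1 x := by
  by_cases hx : C.f i x = 1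
  · simp [hx]
  rw [Set.indicator_of_mem hx, Pi.one_apply, mul_one, norm_mul]
  have hb : (1 : ℝ) ≤ 1 + 1 / (6 * C.Δ) := by simp only [le_add_iff_nonneg_right]; positivity
  calc ‖C.f i x - 1‖ * ‖C.prodFun N x‖
      ≤ (2 + 1 / (6 * C.Δ)) * (1 + 1 / (6 * C.Δ)) ^ C.Δ :=
        mul_le_mul (C.norm_sub_one_le i x)
          ((C.norm_prodFun_le N x).trans (pow_le_pow_right₀ hb hN)) (norm_nonneg _) (by positivity)
    _ ≤ 3 := two_add_mul_one_add_pow_le_three C.Δ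

theorem dependsOn_prodFun (S : Finset V) : DependsOn (C.prodFun S) (S.biUnion C.J) :=
  fun x y hxy => prod_congr rfl fun i hi => C.dependsOn i fun j hj =>
    hxy j (by simpa using ⟨i, hi, hj⟩)

theorem dependsOn_sub_one_mul_prodFun (i : V) (N : Finset V) :
    DependsOn (fun x => (C.f i x - 1) * C.prodFun N x) ↑(C.J i ∪ N.biUnion C.J) :=
  fun x y hxy => by
    dsimp only
    rw [C.dependsOn i fun j hj => hxy j (by simp [hj]),
      C.dependsOn_prodFun N fun j hj => hxy j (by simp_all)]

theorem dependsOn_indicator_ne_one (i : V) :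
    DependsOn ({x | C.f i x ≠ 1}.indicator (1 : (∀ j, Ω j) → ℝ)) ↑(C.J i) := fun x y hxy => by
  simp only [Set.indicator_apply, Set.mem_ofPred_eq, C.dependsOn i hxy, Pi.one_apply]

theorem touching_peel_subset {i : V} {F : Finset V} (hiF : i ∉ F) (K : Finset ι) :
    C.touching (F \ C.nbr i) (K ∪ (C.J i ∪ (F ∩ C.nbr i).biUnion C.J)) ⊆
      C.touching F K ∪ (F ∩ C.nbr i).biUnion C.nbr := by
  intro j hj
  obtain ⟨hjF, c, hc⟩ := mem_filter.1 hj
  obtain ⟨hjF, hji⟩ := mem_sdiff.1 hjF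
  obtain ⟨hcj, hc⟩ := mem_inter.1 hc
  rcases mem_union.1 hc with hcK | hc
  · exact mem_union_left _ (mem_filter.2 ⟨hjF, c, mem_inter.2 ⟨hcj, hcK⟩⟩)
  rcases mem_union.1 hc with hci | hc
  · exact absurd (C.disjoint_J_of_notMem_nbr hji fun h => hiF (h ▸ hjF))
      (not_disjoint_iff.2 ⟨c, hci, hcj⟩)
  obtain ⟨k, hk, hck⟩ := mem_biUnion.1 hc
  refine mem_union_right _ (mem_biUnion.2 ⟨k, hk, ?_⟩)
  simp only [nbr, mem_filter, mem_univ, true_and]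
  exact ⟨fun h => hji (h ▸ (mem_inter.1 hk).2), c, mem_inter.2 ⟨hck, hcj⟩⟩

theorem card_touching_peel_le {i : V} {F : Finset V} (hiF : i ∉ F) (K : Finset ι) :
    #(C.touching (F \ C.nbr i) (K ∪ (C.J i ∪ (F ∩ C.nbr i).biUnion C.J))) ≤
      #(C.touching F K) + C.Δ ^ 2 :=
  calc _ ≤ #(C.touching F K ∪ (F ∩ C.nbr i).biUnion C.nbr) :=
        card_le_card (C.touching_peel_subset hiF K)
    _ ≤ #(C.touching F K) + #(F ∩ C.nbr i) * C.Δ :=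
        (card_union_le _ _).trans (by
          gcongr; exact card_biUnion_le_card_mul _ _ _ fun k _ => C.card_nbr_le' k)
    _ ≤ #(C.touching F K) + C.Δ ^ 2 := by
        rw [sq]
        gcongr
        exact (card_le_card inter_subset_right).trans (C.card_nbr_le' i)

def ErasureBound (s : ℕ) : Prop :=
  ∀ S : Finset V, #S ≤ s → ∀ i ∈ S,
    ‖C.integralProd S - C.integralProd (S.erase i)‖ ≤ C.ε * ‖C.integralProd (S.erase i)‖

def CondNormBound (s : ℕ) : Prop :=
  ∀ (F : Finset V) (K : Finset ι), #F ≤ s →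
    C.condNormProd F K ≤ (1 + 3 * C.ε) ^ #(C.touching F K) * ‖C.integralProd F‖

variable {C}

theorem ErasureBound.mono {s t : ℕ} (h : C.ErasureBound t) (hst : s ≤ t) : C.ErasureBound s :=
  fun S hS => h S (hS.trans hst)

theorem one_sub_ε_pow_mul_norm_integralProd_sdiff_le {s : ℕ} (hE : C.ErasureBound s)
    {S W : Finset V} (hS : #S ≤ s) (hW : W ⊆ S) :
    (1 - C.ε) ^ #W * ‖C.integralProd (S \ W)‖ ≤ ‖C.integralProd S‖ := by
  induction W using Finset.induction_on with
  | empty => simp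
  | insert k W hkW ih =>
    have hk : k ∈ S \ W := mem_sdiff.2 ⟨hW (mem_insert_self k W), hkW⟩
    have hstep := one_sub_mul_norm_le_of_norm_sub_le
      (hE (S \ W) ((card_le_card sdiff_subset).trans hS) k hk)
    rw [← sdiff_insert] at hstep
    calc (1 - C.ε) ^ #(insert k W) * ‖C.integralProd (S \ insert k W)‖
        = (1 - C.ε) ^ #W * ((1 - C.ε) * ‖C.integralProd (S \ insert k W)‖) := by
          rw [card_insert_of_notMem hkW, pow_succ, mul_assoc]
      _ ≤ (1 - C.ε) ^ #W * ‖C.integralProd (S \ W)‖ :=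
          mul_le_mul_of_nonneg_left hstep (pow_nonneg (by linarith [C.ε_le_third]) _)
      _ ≤ ‖C.integralProd S‖ := ih ((subset_insert k W).trans hW)

theorem norm_integralProd_sdiff_le_two {s : ℕ} (hE : C.ErasureBound s) {S W : Finset V}
    (hS : #S ≤ s) (hW : W ⊆ S) (hWΔ : #W ≤ C.Δ) :
    ‖C.integralProd (S \ W)‖ ≤ 2 * ‖C.integralProd S‖ := by
  have hpow : (1 - C.ε) ^ C.Δ ≤ (1 - C.ε) ^ #W :=
    pow_le_pow_of_le_one (by linarith [C.ε_le_third]) (by linarith [C.ε_nonneg]) hWΔ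
  nlinarith [one_sub_ε_pow_mul_norm_integralProd_sdiff_le hE hS hW,
    C.one_le_two_mul_one_sub_ε_pow, norm_nonneg (C.integralProd (S \ W))]

variable (C) [∀ j, IsProbabilityMeasure (volume : Measure (Ω j))]

@[simp]
theorem integralProd_empty : C.integralProd ∅ = 1 := by
  simp [integralProd, prodFun]

theorem integrable_prodFun (S : Finset V) : Integrable (C.prodFun S) :=
  .of_bound (C.measurable_prodFun S).aestronglyMeasurable _ (.of_forall (C.norm_prodFun_le S))

theorem condNormProd_of_touching_eq_empty {F : Finset V} {K : Finset ι}
    (h : C.touching F K = ∅) : C.condNormProd F K = ‖C.integralProd F‖ := by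
  have hdisj : Disjoint (↑(F.biUnion C.J) : Set ι) ↑K := by
    rw [disjoint_coe, disjoint_biUnion_left]
    intro j hj
    rw [disjoint_iff_inter_eq_empty]
    by_contra hne
    exact filter_eq_empty_iff.1 h hj (nonempty_iff_ne_empty.2 hne)
  simp [condNormProd, condExpCoords_of_dependsOn_disjoint (C.dependsOn_prodFun F) hdisj,
    integralProd]

theorem integrable_indicator_mul_norm_condExpCoords (i : V) (F : Finset V) (K : Finset ι) :
    Integrable fun x =>
      {x | C.f i x ≠ 1}.indicator (1 : (∀ j, Ω j) → ℝ) x * ‖condExpCoords K (C.prodFun F) x‖ :=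
  (integrable_condExpCoords _ (C.measurable_prodFun _) (C.norm_prodFun_le _)).norm.bdd_mul
    (measurable_one.indicator (C.measurableSet_ne_one i)).aestronglyMeasurable
    (.of_forall fun _ => (norm_indicator_le_norm_self _ _).trans_eq norm_one)

theorem integral_indicator_mul_norm_condExpCoords {i : V} {F : Finset V} (hiF : i ∉ F)
    (K : Finset ι) :
    ∫ x, {x | C.f i x ≠ 1}.indicator 1 x * ‖condExpCoords K (C.prodFun (F \ C.nbr i)) x‖ =
      volume.real {x | C.f i x ≠ 1} * C.condNormProd (F \ C.nbr i) K := by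
  rw [integral_mul_of_dependsOn_disjoint (C.dependsOn_indicator_ne_one i)
    (fun x y hxy => congrArg norm (((C.dependsOn_prodFun _).condExpCoords _) hxy))
    (C.disjoint_biUnion_sdiff_nbr hiF) (C.integrable_indicator_mul_norm_condExpCoords i _ K),
    integral_indicator_one (C.measurableSet_ne_one i)]
  rfl

/-- After conditioning on the coordinates of `f i` and of its neighbours in `F`, the factor
`f i - 1` lives on an event of probability at most `(3Δ)⁻³` that is independent of the product
over `F \ nbr i`. -/
theorem integral_norm_condExpCoords_sub_one_mul_le_condNormProd {i : V} {F : Finset V}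
    (hiF : i ∉ F) (K : Finset ι) :
    ∫ y, ‖condExpCoords K (fun x => (C.f i x - 1) * C.prodFun F x) y‖ ≤
      C.ε / 4 * C.condNormProd (F \ C.nbr i) (K ∪ (C.J i ∪ (F ∩ C.nbr i).biUnion C.J)) := by
  set K' := K ∪ (C.J i ∪ (F ∩ C.nbr i).biUnion C.J)
  set E := {x | C.f i x ≠ 1}
  have hsplit : (fun x => (C.f i x - 1) * C.prodFun F x) =
      (fun x => (C.f i x - 1) * C.prodFun (F ∩ C.nbr i) x) * C.prodFun (F \ C.nbr i) := by
    funext x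
    simp only [prodFun, Pi.mul_apply, mul_assoc]
    exact congrArg _ (prod_inter_mul_prod_sdiff F (C.nbr i) _).symm
  have haE := C.norm_sub_one_mul_prodFun_le_indicator (i := i) (N := F ∩ C.nbr i)
    ((card_le_card inter_subset_right).trans (C.card_nbr_le' i))
  have haC : ∀ x, ‖(C.f i x - 1) * C.prodFun (F ∩ C.nbr i) x‖ ≤ 3 := fun x =>
    (haE x).trans <| by
      have : E.indicator (1 : (∀ j, Ω j) → ℝ) x ≤ 1 :=
        Set.indicator_apply_le' (fun _ => le_rfl) fun _ => zero_le_one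
      linarith
  calc ∫ y, ‖condExpCoords K (fun x => (C.f i x - 1) * C.prodFun F x) y‖
      ≤ ∫ x, ‖(C.f i x - 1) * C.prodFun (F ∩ C.nbr i) x‖ *
          ‖condExpCoords K' (C.prodFun (F \ C.nbr i)) x‖ := by
        rw [hsplit]
        exact integral_norm_condExpCoords_mul_le (C.dependsOn_sub_one_mul_prodFun i _)
          (((C.measurable i).sub measurable_const).mul (C.measurable_prodFun _)) haC
          (C.measurable_prodFun _) (C.norm_prodFun_le _)
    _ ≤ ∫ x, 3 * (E.indicator 1 x * ‖condExpCoords K' (C.prodFun (F \ C.nbr i)) x‖) :=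
        integral_mono_of_nonneg (.of_forall fun _ => by positivity)
          ((C.integrable_indicator_mul_norm_condExpCoords i _ K').const_mul 3)
          (.of_forall fun x => by
            dsimp only
            rw [← mul_assoc]
            exact mul_le_mul_of_nonneg_right (haE x) (norm_nonneg _))
    _ = 3 * (volume.real E * C.condNormProd (F \ C.nbr i) K') := by
        rw [integral_const_mul, C.integral_indicator_mul_norm_condExpCoords hiF K']
    _ ≤ C.ε / 4 * C.condNormProd (F \ C.nbr i) K' := by
        have hT : 0 ≤ C.condNormProd (F \ C.nbr i) K' := integral_nonneg fun _ => norm_nonneg _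
        have := C.measureReal_ne_one_le i
        rw [ε]
        nlinarith

variable {C}

theorem integral_norm_condExpCoords_sub_one_mul_le_norm_integralProd {s : ℕ}
    (hE : C.ErasureBound s) (hT : C.CondNormBound s) {i : V} {F : Finset V} (hiF : i ∉ F)
    (hF : #F ≤ s) (K : Finset ι) :
    ∫ y, ‖condExpCoords K (fun x => (C.f i x - 1) * C.prodFun F x) y‖ ≤
      C.ε * ((1 + 3 * C.ε) ^ #(C.touching F K) * ‖C.integralProd F‖) := by
  set K' := K ∪ (C.J i ∪ (F ∩ C.nbr i).biUnion C.J)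
  have hψ : 1 ≤ 1 + 3 * C.ε := by linarith [C.ε_nonneg]
  have hT' : C.condNormProd (F \ C.nbr i) K' ≤
      (1 + 3 * C.ε) ^ #(C.touching F K) * 2 * (2 * ‖C.integralProd F‖) :=
    calc C.condNormProd (F \ C.nbr i) K'
        ≤ (1 + 3 * C.ε) ^ #(C.touching (F \ C.nbr i) K') * ‖C.integralProd (F \ C.nbr i)‖ :=
          hT _ _ ((card_le_card sdiff_subset).trans hF)
      _ ≤ (1 + 3 * C.ε) ^ (#(C.touching F K) + C.Δ ^ 2) * ‖C.integralProd (F \ C.nbr i)‖ := by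
          gcongr
          exact C.card_touching_peel_le hiF K
      _ ≤ (1 + 3 * C.ε) ^ #(C.touching F K) * 2 * (2 * ‖C.integralProd F‖) := by
          rw [pow_add, ← sdiff_inter_self_left]
          gcongr
          · exact C.one_add_three_ε_pow_le_two
          · exact norm_integralProd_sdiff_le_two hE hF inter_subset_left
              ((card_le_card inter_subset_right).trans (C.card_nbr_le' i))
  calc _ ≤ C.ε / 4 * C.condNormProd (F \ C.nbr i) K' :=
        C.integral_norm_condExpCoords_sub_one_mul_le_condNormProd hiF K
    _ ≤ C.ε / 4 * ((1 + 3 * C.ε) ^ #(C.touching F K) * 2 * (2 * ‖C.integralProd F‖)) := by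
        gcongr
        linarith [C.ε_nonneg]
    _ = _ := by ring

theorem ErasureBound.succ {s : ℕ} (hE : C.ErasureBound s) (hT : C.CondNormBound s) :
    C.ErasureBound (s + 1) := by
  intro S hS i hi
  have hS' : #(S.erase i) ≤ s := by rw [card_erase_of_mem hi]; omega
  have hdiff : C.integralProd S - C.integralProd (S.erase i) =
      ∫ x, (C.f i x - 1) * C.prodFun (S.erase i) x := by
    rw [integralProd, integralProd,
      ← integral_sub (C.integrable_prodFun _) (C.integrable_prodFun _)]
    congr 1
    funext x
    rw [prodFun, prodFun, ← mul_prod_erase S _ hi]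
    ring
  simpa [hdiff, condExpCoords_empty, touching] using
    integral_norm_condExpCoords_sub_one_mul_le_norm_integralProd hE hT (notMem_erase i S) hS' ∅

theorem condNormProd_le_erase_add {j : V} {F : Finset V} (hj : j ∈ F) (K : Finset ι) :
    C.condNormProd F K ≤ C.condNormProd (F.erase j) K +
      ∫ y, ‖condExpCoords K (fun x => (C.f j x - 1) * C.prodFun (F.erase j) x) y‖ := by
  have hsplit : C.prodFun F =
      C.prodFun (F.erase j) + fun x => (C.f j x - 1) * C.prodFun (F.erase j) x := by
    funext x
    simp only [prodFun, Pi.add_apply]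
    rw [← mul_prod_erase F _ hj]
    ring
  rw [condNormProd, hsplit]
  exact integral_norm_condExpCoords_add_le K (C.measurable_prodFun _) (C.norm_prodFun_le _)
    (((C.measurable j).sub measurable_const).mul (C.measurable_prodFun _)) fun x => by
      rw [norm_mul]
      exact mul_le_mul (C.norm_sub_one_le j x) (C.norm_prodFun_le _ x) (norm_nonneg _)
        (by positivity)

theorem CondNormBound.succ {s : ℕ} (hE : C.ErasureBound (s + 1)) (hT : C.CondNormBound s) :
    C.CondNormBound (s + 1) := by
  intro F K hF
  obtain hempty | ⟨j, hj⟩ := (C.touching F K).eq_empty_or_nonempty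
  · rw [C.condNormProd_of_touching_eq_empty hempty, hempty, card_empty, pow_zero, one_mul]
  have hjF : j ∈ F := (mem_filter.1 hj).1
  have hF₀ : #(F.erase j) ≤ s := by rw [card_erase_of_mem hjF]; omega
  have hcard : #(C.touching (F.erase j) K) + 1 = #(C.touching F K) := by
    rw [touching, filter_erase, ← touching, card_erase_add_one hj]
  have hP := one_sub_mul_norm_le_of_norm_sub_le (hE F hF j hjF)
  have hψ : 0 ≤ (1 + 3 * C.ε) ^ #(C.touching (F.erase j) K) :=
    pow_nonneg (by linarith [C.ε_nonneg]) _
  calc C.condNormProd F K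
      ≤ (1 + 3 * C.ε) ^ #(C.touching (F.erase j) K) * ‖C.integralProd (F.erase j)‖ +
          C.ε * ((1 + 3 * C.ε) ^ #(C.touching (F.erase j) K) * ‖C.integralProd (F.erase j)‖) :=
        (condNormProd_le_erase_add hjF K).trans (add_le_add (hT _ K hF₀)
          (integral_norm_condExpCoords_sub_one_mul_le_norm_integralProd (hE.mono s.le_succ) hT
            (notMem_erase j F) hF₀ K))
    _ = (1 + 3 * C.ε) ^ #(C.touching (F.erase j) K) *
          ((1 + C.ε) * ‖C.integralProd (F.erase j)‖) := by ring
    _ ≤ (1 + 3 * C.ε) ^ #(C.touching (F.erase j) K) * ((1 + 3 * C.ε) * ‖C.integralProd F‖) := by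
        refine mul_le_mul_of_nonneg_left ?_ hψ
        calc (1 + C.ε) * ‖C.integralProd (F.erase j)‖
            ≤ (1 + 3 * C.ε) * ((1 - C.ε) * ‖C.integralProd (F.erase j)‖) := by
              rw [← mul_assoc]
              exact mul_le_mul_of_nonneg_right C.one_add_ε_le (norm_nonneg _)
          _ ≤ (1 + 3 * C.ε) * ‖C.integralProd F‖ :=
              mul_le_mul_of_nonneg_left hP (by linarith [C.ε_nonneg])
    _ = (1 + 3 * C.ε) ^ #(C.touching F K) * ‖C.integralProd F‖ := by
        rw [← hcard, pow_succ, mul_assoc]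

variable (C)

theorem erasureBound_and_condNormBound : ∀ s, C.ErasureBound s ∧ C.CondNormBound s
  | 0 => ⟨fun _ hS _ hi => absurd (card_pos.2 ⟨_, hi⟩) (by omega), fun F K hF => by
      rw [card_eq_zero.1 (Nat.le_zero.1 hF),
        C.condNormProd_of_touching_eq_empty (by simp [touching])]
      simp [touching]⟩
  | s + 1 =>
    have hE := (erasureBound_and_condNormBound s).1.succ (erasureBound_and_condNormBound s).2
    ⟨hE, (erasureBound_and_condNormBound s).2.succ hE⟩

theorem one_sub_ε_pow_card_le_norm_integralProd (S : Finset V) :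
    (1 - C.ε) ^ #S ≤ ‖C.integralProd S‖ := by
  simpa using one_sub_ε_pow_mul_norm_integralProd_sdiff_le
    (C.erasureBound_and_condNormBound #S).1 le_rfl (subset_refl S)

theorem integralProd_ne_zero (S : Finset V) : C.integralProd S ≠ 0 := fun h => by
  have := C.one_sub_ε_pow_card_le_norm_integralProd S
  rw [h, norm_zero] at this
  exact this.not_gt (pow_pos (by linarith [C.ε_le_third]) _)

end LocalFamily

theorem stmt_17 (m n : ℕ) (Ω : Fin m → Type*)
    [∀ j, MeasureSpace (Ω j)] [∀ j, IsProbabilityMeasure (volume : Measure (Ω j))]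
    (f : Fin n → (∀ j, Ω j) → ℂ) (hmeas : ∀ i, Measurable (f i))
    (r D : Fin n → ℕ) (J : Fin n → Finset (Fin m))
    -- each `f i` depends on at most `r i` coordinates, witnessed by the set `J i`
    (hdep : ∀ i, ∀ x y : ∀ j, Ω j, (∀ j ∈ J i, x j = y j) → f i x = f i y)
    (hcard : ∀ i, (J i).card ≤ r i)
    -- `f i` shares a coordinate with at most `D i` of the other functions
    (hshare : ∀ i, (Finset.univ.filter fun j => j ≠ i ∧ (J i ∩ J j).Nonempty).card ≤ D i)
    (Δ : ℕ) (hΔ : Δ = max 5 (Finset.univ.sup D))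
    (μ : Fin n → ℕ) (hμ : ∀ i, μ i = min (r i) (D i + 1))
    (hbound : ∀ i x, ‖f i x‖ ≤ 1 + 1 / (6 * (Δ : ℝ)))
    (hprob : ∀ i,
      ((Measure.pi fun j => (volume : Measure (Ω j))) {x | f i x ≠ 1}).toReal <
        (((3 * (Δ : ℝ)) ^ (3 * μ i)))⁻¹) :
    (∫ x, ∏ i : Fin n, f i x ∂Measure.pi fun j => (volume : Measure (Ω j))) ≠ 0 := by
  have hΔ5 : 5 ≤ Δ := hΔ ▸ le_max_left _ _
  have h3Δ : (1 : ℝ) ≤ 3 * Δ := by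
    have : (5 : ℝ) ≤ Δ := by exact_mod_cast hΔ5
    linarith
  have hprob' (i : Fin n) : volume.real {x | f i x ≠ 1} ≤ ((3 * (Δ : ℝ)) ^ 3)⁻¹ := by
    rcases Nat.eq_zero_or_pos (μ i) with hμi | hμi
    · have hJ : J i = ∅ := card_eq_zero.1 (by have := hcard i; have := hμ i; omega)
      have hlt := hprob i
      rw [hμi, mul_zero, pow_zero, inv_one] at hlt
      rw [measureReal_setOf_eq_zero_of_const (ν := volume) (p := (· ≠ 1))
        (fun x y => hdep i x y (by simp [hJ])) hlt]
      positivity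
    · exact (hprob i).le.trans (inv_anti₀ (by positivity) (pow_le_pow_right₀ h3Δ (by omega)))
  exact LocalFamily.integralProd_ne_zero
    { f, J, Δ, measurable := hmeas, dependsOn := fun i x y h => hdep i x y h
      five_le_Δ := hΔ5
      card_nbr_le := fun i => (hshare i).trans (hΔ ▸ (le_sup (mem_univ i)).trans (le_max_right _ _))
      norm_le := hbound, measureReal_ne_one_le := hprob' } univ
end
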